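/- Let P_4 ⊆ P, τ ∈ ℕ, and let c ∈ P_4 be a point such that |Gain(c, q) ∩ P_4| ≤ τ for every q ∈ 𝓑(c). Let P_s ⊆ P_4 with c ∈ P_s, let j ∈ P_s be a dense point (i.e., |R ∩ 𝓑(j) ∩ P_s| > 2τ), let I_j = {i ∈ P_s : |R ∩ 𝓑(i) ∩ 𝓑(j) ∩ P_s| > τ}, and let D_j = ∪_{i ∈ I_j} 𝓑(i) ∩ P_s. Then either c ∈ I_j or 𝓑(c) ∩ D_j = ∅. -/

import Mathlib

open scoped Classical

/-- The ball of radius `ρ` around `j` in a finite metric space. -/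
noncomputable def bal {P : Type*} [Fintype P] [MetricSpace P] (j : P) (ρ : ℝ) : Finset P :=
  Finset.univ.filter fun i => dist i j ≤ ρ

/-- The flower centered at `j`. -/
noncomputable def flower {P : Type*} [Fintype P] [MetricSpace P] (j : P) : Finset P :=
  (bal j 1).biUnion fun i => bal i 1

/-- `Gain(p, q)`: the set of red points added to `𝓑(p)` by forming a flower centered at `q`. -/
noncomputable def gain {P : Type*} [Fintype P] [MetricSpace P] (R : Finset P) (p q : P) :
    Finset P :=
  R ∩ (flower q \ bal p 1)

/-!
If `𝓑(c)` meets `D_j`, some `q ∈ 𝓑(c)` lies in `𝓑(i)` with `i ∈ I_j`. The flower at `q` contains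
`𝓑(i)`, so all but at most `τ` of the more than `τ` red points of `𝓑(i) ∩ 𝓑(j) ∩ P_s` lie in
`𝓑(c)`; pick one, `y`. The flower at `y` contains `𝓑(j)`, so all but at most `τ` of the more
than `2τ` red points of `𝓑(j) ∩ P_s` lie in `𝓑(c)`, which puts `c` in `I_j`.
-/

section Flower

variable {P : Type*} [Fintype P] [MetricSpace P]

theorem mem_bal {x y : P} {ρ : ℝ} : x ∈ bal y ρ ↔ dist x y ≤ ρ := by
  simp [bal]

theorem mem_bal_comm {x y : P} {ρ : ℝ} : x ∈ bal y ρ ↔ y ∈ bal x ρ := by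
  rw [mem_bal, mem_bal, dist_comm]

theorem bal_subset_flower {i q : P} (hi : i ∈ bal q 1) : bal i 1 ⊆ flower q :=
  fun _ hx => Finset.mem_biUnion.2 ⟨i, hi, hx⟩

theorem sdiff_bal_subset_gain_inter {R A S : Finset P} {c q : P} (hSR : S ⊆ R)
    (hSq : S ⊆ flower q) (hSA : S ⊆ A) : S \ bal c 1 ⊆ gain R c q ∩ A := by
  intro x hx
  obtain ⟨hxS, hxc⟩ := Finset.mem_sdiff.1 hx
  exact Finset.mem_inter.2
    ⟨Finset.mem_inter.2 ⟨hSR hxS, Finset.mem_sdiff.2 ⟨hSq hxS, hxc⟩⟩, hSA hxS⟩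

theorem card_le_card_inter_bal_add {R A S : Finset P} {c q i : P} {τ : ℕ}
    (hgain : ∀ q ∈ bal c 1, (gain R c q ∩ A).card ≤ τ) (hq : q ∈ bal c 1)
    (hiq : i ∈ bal q 1) (hS : S ⊆ R ∩ bal i 1 ∩ A) :
    S.card ≤ (S ∩ bal c 1).card + τ := by
  have hSR : S ⊆ R := hS.trans (Finset.inter_subset_left.trans Finset.inter_subset_left)
  have hSi : S ⊆ bal i 1 := hS.trans (Finset.inter_subset_left.trans Finset.inter_subset_right)
  have hSA : S ⊆ A := hS.trans Finset.inter_subset_right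
  have hout : (S \ bal c 1).card ≤ τ :=
    (Finset.card_le_card (sdiff_bal_subset_gain_inter hSR
      (hSi.trans (bal_subset_flower hiq)) hSA)).trans (hgain q hq)
  have := Finset.card_inter_add_card_sdiff S (bal c 1)
  omega

end Flower

theorem stmt6_general {P : Type*} [Fintype P] [MetricSpace P]
    (R : Finset P)
    (P₄ : Finset P) (τ : ℕ)
    (c : P)
    (hgain : ∀ q ∈ bal c 1, (gain R c q ∩ P₄).card ≤ τ)
    (Ps : Finset P) (hPs : Ps ⊆ P₄) (hcPs : c ∈ Ps)
    (j : P) (hdense : 2 * τ < (R ∩ bal j 1 ∩ Ps).card)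
    (Ij Dj : Finset P)
    (hIj : Ij = Ps.filter fun i => τ < (R ∩ bal i 1 ∩ bal j 1 ∩ Ps).card)
    (hDj : Dj = Ij.biUnion fun i => bal i 1 ∩ Ps) :
    c ∈ Ij ∨ bal c 1 ∩ Dj = ∅ := by
  subst hIj hDj
  rcases Finset.eq_empty_or_nonempty (bal c 1 ∩ _) with hempty | ⟨q, hq⟩
  · exact Or.inr hempty
  simp only [Finset.mem_inter, Finset.mem_biUnion, Finset.mem_filter] at hq
  obtain ⟨hqc, i, ⟨-, hi⟩, hqi, -⟩ := hq
  have hi_near := card_le_card_inter_bal_add (S := R ∩ bal i 1 ∩ bal j 1 ∩ Ps) hgain hqc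
    (mem_bal_comm.1 hqi) (Finset.inter_subset_inter Finset.inter_subset_left hPs)
  obtain ⟨y, hy⟩ : (R ∩ bal i 1 ∩ bal j 1 ∩ Ps ∩ bal c 1).Nonempty :=
    Finset.card_pos.1 (by omega)
  obtain ⟨hyS, hyc⟩ := Finset.mem_inter.1 hy
  have hjy : j ∈ bal y 1 := mem_bal_comm.1 (Finset.mem_inter.1 (Finset.mem_inter.1 hyS).1).2
  have hj_near := card_le_card_inter_bal_add hgain hyc hjy
    (Finset.inter_subset_inter_left hPs)
  rw [show R ∩ bal j 1 ∩ Ps ∩ bal c 1 = R ∩ bal c 1 ∩ bal j 1 ∩ Ps by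
    ext x; simp only [Finset.mem_inter]; tauto] at hj_near
  exact Or.inl (Finset.mem_filter.2 ⟨hcPs, by omega⟩)

/-- if `c` has all gains in `P₄` bounded by `τ`, `j ∈ P_s` is a dense point,
`I_j` is the set of points whose unit balls intersect `𝓑(j)` in more than `τ` red points
of `P_s`, and `D_j = ∪_{i ∈ I_j} 𝓑(i) ∩ P_s`, then either `c ∈ I_j` or `𝓑(c) ∩ D_j = ∅`. -/
theorem stmt6 {P : Type*} [Fintype P] [MetricSpace P]
    (R B : Finset P) (hpart : ∀ p : P, (p ∈ R ∧ p ∉ B) ∨ (p ∈ B ∧ p ∉ R))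
    (P₄ : Finset P) (τ : ℕ)
    (c : P) (hcP₄ : c ∈ P₄)
    (hgain : ∀ q ∈ bal c 1, (gain R c q ∩ P₄).card ≤ τ)
    (Ps : Finset P) (hPs : Ps ⊆ P₄) (hcPs : c ∈ Ps)
    (j : P) (hj : j ∈ Ps) (hdense : 2 * τ < (R ∩ bal j 1 ∩ Ps).card)
    (Ij Dj : Finset P)
    (hIj : Ij = Ps.filter fun i => τ < (R ∩ bal i 1 ∩ bal j 1 ∩ Ps).card)
    (hDj : Dj = Ij.biUnion fun i => bal i 1 ∩ Ps) :
    c ∈ Ij ∨ bal c 1 ∩ Dj = ∅ :=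
  stmt6_general R P₄ τ c hgain Ps hPs hcPs j hdense Ij Dj hIj hDj
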